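/- arXiv:1610.06280 — 6 statements merged into one kernel-verified Lean document; each statement's English description precedes it below -/
import Mathlib

section
/- For every positive integer d, the sum over all permutations σ of {1,…,d−1} of the product over j from 1 to d−1 of the reciprocal of (x_{σ(1)}+⋯+x_{σ(j)}), evaluated at x = (2,1,1,…,1) (one 2 followed by d−2 ones), equals 1/2. -/
open Finset Nat

private lemma stmt_1_g_prod (k n : ℕ) (hk : k < n) :
    (k + 1) * ∏ j ∈ range n, (if j < k then j + 1 else j + 2) = (n + 1)! := by
  induction n with
  | zero => omega
  | succ n ih =>
    rw [prod_range_succ, if_neg (by omega), ← mul_assoc]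
    rcases Nat.lt_or_ge k n with h | h
    · rw [ih h, show n + 1 + 1 = n + 2 from rfl, Nat.factorial_succ (n+1)]
      ring
    · have hk' : k = n := by omega
      rw [hk']
      have : ∏ j ∈ range n, (if j < n then j + 1 else j + 2) = n ! := by
        rw [← prod_range_add_one_eq_factorial]
        exact prod_congr rfl fun j hj => if_pos (mem_range.mp hj)
      rw [this, show n + 1 + 1 = n + 2 from rfl, Nat.factorial_succ (n+1), Nat.factorial_succ n]
      ring

private lemma stmt_1_term_eq (n : ℕ) (σ : Equiv.Perm (Fin (n+1))) :
    ∏ j : Fin (n+1), (∑ i ∈ univ.filter (· ≤ j), (if σ i = 0 then (2:ℚ) else 1))⁻¹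
      = (((σ⁻¹ 0 : Fin (n+1)) : ℕ) + 1 : ℚ) / (n + 2)! := by
  have hσ : ∀ i, σ i = 0 ↔ i = σ⁻¹ 0 := fun i => Equiv.apply_eq_iff_eq_symm_apply σ
  generalize hkk : σ⁻¹ 0 = k at hσ ⊢
  have hsum : ∀ j : Fin (n+1), (∑ i ∈ univ.filter (· ≤ j), (if σ i = 0 then (2:ℚ) else 1))
      = (((if (j:ℕ) < (k:ℕ) then (j:ℕ) + 1 else (j:ℕ) + 2 : ℕ) : ℚ)) := by
    intro j
    have h1 : ∀ i, (if σ i = 0 then (2:ℚ) else 1) = 1 + (if i = k then 1 else 0) := by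
      intro i; by_cases h : i = k <;> simp [h, hσ] <;> norm_num
    rw [Finset.sum_congr rfl fun i _ => h1 i, Finset.sum_add_distrib,
      Finset.sum_ite_eq' (univ.filter (· ≤ j)) k (fun _ => (1:ℚ)), Finset.sum_const]
    have hcard : (univ.filter (· ≤ j)).card = (j:ℕ) + 1 := by
      have : univ.filter (· ≤ j) = Finset.Iic j := by ext i; simp
      rw [this, Fin.card_Iic]
    have hmem : k ∈ univ.filter (· ≤ j) ↔ (k:ℕ) ≤ (j:ℕ) := by
      simp only [mem_filter, mem_univ, true_and]; exact Fin.le_def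
    rw [hcard]
    by_cases hkj : (k:ℕ) ≤ (j:ℕ)
    · rw [if_pos (hmem.mpr hkj), if_neg (by omega)]
      push_cast; ring
    · rw [if_neg (fun hm => hkj (hmem.mp hm)), if_pos (by omega)]
      push_cast; ring
  rw [Finset.prod_congr rfl fun j _ => congrArg Inv.inv (hsum j), Finset.prod_inv_distrib,
    ← Nat.cast_prod,
    Fin.prod_univ_eq_prod_range (fun m => if m < (k:ℕ) then m + 1 else m + 2) (n+1)]
  have hg := stmt_1_g_prod (k:ℕ) (n+1) k.isLt
  set P : ℚ := ((∏ j ∈ range (n+1), (if j < (k:ℕ) then j + 1 else j + 2) : ℕ) : ℚ) with hPdef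
  have hgQ : ((k:ℕ) + 1 : ℚ) * P = ((n + 2)! : ℚ) := by
    rw [hPdef]; exact_mod_cast hg
  have hfac : ((n + 2)! : ℚ) ≠ 0 := by
    exact_mod_cast Nat.factorial_ne_zero (n+2)
  have hPne : P ≠ 0 := by
    intro h0; rw [h0, mul_zero] at hgQ; exact hfac hgQ.symm
  rw [eq_div_iff hfac, ← hgQ, mul_comm (((k:ℕ):ℚ) + 1) P, ← mul_assoc,
    inv_mul_cancel₀ hPne, one_mul]

private lemma stmt_1_sum_eq (n : ℕ) :
    ∑ σ : Equiv.Perm (Fin (n+1)), ((((σ⁻¹ 0 : Fin (n+1)) : ℕ) : ℚ) + 1)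
      = ((n + 2)! : ℚ) / 2 := by
  set f : Equiv.Perm (Fin (n+1)) → ℚ := fun σ => (((σ⁻¹ 0 : Fin (n+1)) : ℕ) : ℚ) + 1 with hf
  have h2 : ∑ σ : Equiv.Perm (Fin (n+1)), f σ = ∑ σ : Equiv.Perm (Fin (n+1)), f (σ * Fin.revPerm) :=
    Fintype.sum_equiv (Equiv.mulRight Fin.revPerm⁻¹) _ _ (fun σ => by
      simp [mul_assoc])
  have key : (∑ σ : Equiv.Perm (Fin (n+1)), f σ) * 2 = ((n + 2)! : ℚ) := by
    rw [mul_two]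
    nth_rewrite 2 [h2]
    rw [← Finset.sum_add_distrib]
    have hterm : ∀ σ : Equiv.Perm (Fin (n+1)), f σ + f (σ * Fin.revPerm) = (n : ℚ) + 2 := by
      intro σ
      have h1 : ((σ * Fin.revPerm)⁻¹ : Equiv.Perm (Fin (n+1))) 0 = Fin.rev (σ⁻¹ 0) := by
        simp only [mul_inv_rev, Equiv.Perm.mul_apply]
        show Fin.revPerm.symm (σ⁻¹ 0) = (σ⁻¹ 0).rev
        simp
      have h3 : ((Fin.rev (σ⁻¹ 0) : Fin (n+1)) : ℕ) = n - ((σ⁻¹ 0 : Fin (n+1)) : ℕ) := by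
        rw [Fin.val_rev]; omega
      have hle : ((σ⁻¹ 0 : Fin (n+1)) : ℕ) ≤ n := Nat.lt_succ_iff.mp (σ⁻¹ 0).isLt
      rw [hf]
      simp only [h1, h3]
      rw [Nat.cast_sub hle]
      ring
    rw [Finset.sum_congr rfl fun σ _ => hterm σ, Finset.sum_const, Finset.card_univ,
      Fintype.card_perm, Fintype.card_fin]
    rw [nsmul_eq_mul]
    have : ((n+2)! : ℚ) = ((n+1)! : ℚ) * ((n:ℚ) + 2) := by
      rw [show n + 2 = (n+1) + 1 from rfl, Nat.factorial_succ (n+1)]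
      push_cast; ring
    rw [this]
  rw [eq_div_iff (two_ne_zero), key]

/-- For `d ≥ 2`, the sum over all permutations `σ` of `{1,…,d-1}` of the product over
`j = 1,…,d-1` of `(x_{σ(1)} + ⋯ + x_{σ(j)})⁻¹`, with `x = (2,1,…,1)`, equals `1/2`. -/
theorem stmt_1 (d : ℕ) (hd : 2 ≤ d) :
    ∑ σ : Equiv.Perm (Fin (d - 1)), ∏ j : Fin (d - 1),
      (∑ i ∈ Finset.univ.filter (· ≤ j),
        (if σ i = (⟨0, by omega⟩ : Fin (d - 1)) then (2 : ℚ) else 1))⁻¹ = 1 / 2 := by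
  obtain ⟨n, rfl⟩ : ∃ n, d = n + 2 := ⟨d - 2, by omega⟩
  show ∑ σ : Equiv.Perm (Fin (n + 1)), ∏ j : Fin (n + 1),
      (∑ i ∈ Finset.univ.filter (· ≤ j),
        (if σ i = (0 : Fin (n + 1)) then (2 : ℚ) else 1))⁻¹ = 1 / 2
  rw [Finset.sum_congr rfl fun σ _ => stmt_1_term_eq n σ, ← Finset.sum_div, stmt_1_sum_eq n]
  have hfac : ((n + 2)! : ℚ) ≠ 0 := by
    exact_mod_cast Nat.factorial_ne_zero (n+2)
  rw [div_div, mul_comm, ← div_div, div_self hfac]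
end

section
/- For ε > 0 and positive integers x_1,…,x_m, as ε → 0⁺ one has Φ_ε(x_1,…,x_m) = ε^{-m} Σ_{σ∈S_m} [ (Π_{j=1}^m S_j^σ)^{-1} − (ε/2) Σ_{r=1}^m S_r^σ/(Π_{j=1}^m S_j^σ) ] + O(ε^{2−m}), where S_j^σ = x_{σ(1)}+⋯+x_{σ(j)}. -/
open Filter Topology Asymptotics Finset

/-!
With `g(t) = t / (eᵗ - 1) = 1 - t/2 + O(t²)`, each factor is
`(e^{εS} - 1)⁻¹ = ε⁻¹ · S⁻¹ · g(εS) = ε⁻¹ · (S⁻¹ (1 - (S/2) ε) + O(ε²))`.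
First-order expansions `aⱼ (1 + cⱼ ε) + O(ε²)` multiply to `(∏ aⱼ)(1 + (∑ cⱼ) ε) + O(ε²)`;
for `aⱼ = 1/Sⱼ`, `cⱼ = -Sⱼ/2` this is the bracket of the statement, and the prefactor `ε^{-m}`
turns the error `O(ε²)` into `O(ε^{2-m})`. Summing over `σ` finishes the proof.
-/

theorem isBigO_sq_prod_sub_first_order {ι 𝕜 : Type*} [NormedField 𝕜] {l : Filter 𝕜}
    (hl : l ≤ 𝓝 0) (s : Finset ι) (f : ι → 𝕜 → 𝕜) (a c : ι → 𝕜)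
    (hf : ∀ j ∈ s, (fun ε => f j ε - a j * (1 + c j * ε)) =O[l] fun ε => ε ^ 2) :
    (fun ε => ∏ j ∈ s, f j ε - (∏ j ∈ s, a j) * (1 + (∑ j ∈ s, c j) * ε))
      =O[l] fun ε => ε ^ 2 := by
  classical
  have hε : Tendsto (fun ε : 𝕜 => ε) l (𝓝 0) := tendsto_id.mono_left hl
  have hlin (b d : 𝕜) : (fun ε => b * (1 + d * ε)) =O[l] fun _ => (1 : 𝕜) :=
    (tendsto_const_nhds.mul (tendsto_const_nhds.add (tendsto_const_nhds.mul hε))).isBigO_one 𝕜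
  induction s using Finset.induction_on with
  | empty => simpa using isBigO_zero _ _
  | insert i s hi ih =>
    obtain ⟨hfi, hfs⟩ := forall_mem_insert .. |>.mp hf
    have hrem := ih hfs
    have hF : (fun ε => ∏ j ∈ s, f j ε) =O[l] fun _ => (1 : 𝕜) :=
      ((hrem.trans_tendsto (by simpa using hε.pow 2)).isBigO_one 𝕜 |>.add (hlin _ _)).congr_left
        fun ε => sub_add_cancel _ _
    have h₁ := (hfi.mul hF).congr_right fun ε => mul_one _
    have h₂ := ((hlin (a i) (c i)).mul hrem).congr_right fun ε => one_mul _
    have h₃ := isBigO_const_mul_self (a i * (∏ j ∈ s, a j) * c i * ∑ j ∈ s, c j) (· ^ 2) l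
    refine ((h₁.add h₂).add h₃).congr_left fun ε => ?_
    simp only [prod_insert hi, sum_insert hi]
    ring

theorem Real.isBigO_mul_inv_exp_sub_one :
    (fun t : ℝ => t * (exp t - 1)⁻¹ - (1 - t / 2)) =O[𝓝[≠] 0] fun t => t ^ 2 := by
  have hR : (fun t : ℝ => exp t - (1 + t + t ^ 2 / 2)) =O[𝓝 0] fun t => t ^ 3 := by
    simpa [sum_range_succ, add_assoc] using exp_sub_sum_range_isBigO_pow 3
  -- `t - (eᵗ - 1)(1 - t/2) = (t/2 - 1)(eᵗ - 1 - t - t²/2) + t³/4`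
  have hN : (fun t : ℝ => t - (exp t - 1) * (1 - t / 2)) =O[𝓝 0] fun t => t ^ 3 := by
    have hbdd : (fun t : ℝ => t / 2 - 1) =O[𝓝 0] fun _ => (1 : ℝ) :=
      ((continuous_id.div_const 2).sub continuous_const).continuousAt.isBigO_one ℝ
    refine (((hbdd.mul hR).congr_right fun t => one_mul _).add
      (isBigO_const_mul_self (1 / 4 : ℝ) _ _)).congr_left fun t => ?_
    ring
  have hD : (fun t : ℝ => t) =O[𝓝 0] fun t => exp t - 1 := by
    have h2 : (fun t : ℝ => exp t - 1 - t) =O[𝓝 0] fun t => t ^ 2 := by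
      simpa [sum_range_succ, sub_sub] using exp_sub_sum_range_isBigO_pow 2
    exact (h2.trans_isLittleO (isLittleO_pow_id one_lt_two)).isEquivalent.symm.isBigO
  have hDinv : (fun t : ℝ => (exp t - 1)⁻¹) =O[𝓝[≠] 0] fun t => t⁻¹ :=
    (hD.mono nhdsWithin_le_nhds).inv_rev (eventually_nhdsWithin_of_forall fun t ht h => absurd h ht)
  refine ((hN.mono nhdsWithin_le_nhds).mul hDinv).congr' ?_ ?_
  · filter_upwards [self_mem_nhdsWithin] with t (ht : t ≠ 0)
    have : exp t - 1 ≠ 0 := sub_ne_zero.mpr (by simpa using ht)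
    field_simp
  · filter_upwards [self_mem_nhdsWithin] with t (ht : t ≠ 0)
    field_simp

theorem isBigO_mul_inv_exp_mul_sub_one {S : ℝ} (hS : S ≠ 0) :
    (fun ε : ℝ => ε * (Real.exp (ε * S) - 1)⁻¹ - S⁻¹ * (1 + -S / 2 * ε))
      =O[𝓝[≠] 0] fun ε => ε ^ 2 := by
  have hscale : Tendsto (fun ε : ℝ => ε * S) (𝓝[≠] 0) (𝓝[≠] 0) :=
    tendsto_nhdsWithin_iff.mpr ⟨((continuous_mul_const S).tendsto' 0 0 (zero_mul S)).mono_left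
      nhdsWithin_le_nhds, eventually_nhdsWithin_of_forall fun ε hε => mul_ne_zero hε hS⟩
  refine ((Real.isBigO_mul_inv_exp_sub_one.comp_tendsto hscale).const_mul_left S⁻¹).congr'
    ?_ ?_ |>.trans (isBigO_const_mul_self (S ^ 2) _ _)
  · filter_upwards with ε
    simp only [Function.comp_apply]
    field_simp
    ring
  · filter_upwards with ε
    simp only [Function.comp_apply]
    ring

theorem isBigO_prod_inv_exp_mul_sub_one {ι : Type*} [Fintype ι] (S : ι → ℝ)
    (hS : ∀ j, S j ≠ 0) :
    (fun ε : ℝ => ∏ j, (Real.exp (ε * S j) - 1)⁻¹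
        - ε ^ (-(Fintype.card ι : ℤ)) * ((∏ j, S j)⁻¹ - ε / 2 * ∑ r, S r / ∏ j, S j))
      =O[𝓝[≠] 0] fun ε => ε ^ ((2 : ℤ) - Fintype.card ι) := by
  have hprod := isBigO_sq_prod_sub_first_order nhdsWithin_le_nhds univ
    (fun j ε => ε * (Real.exp (ε * S j) - 1)⁻¹) (fun j => (S j)⁻¹) (fun j => -S j / 2)
    fun j _ => isBigO_mul_inv_exp_mul_sub_one (hS j)
  refine ((isBigO_refl (fun ε : ℝ => ε ^ (-(Fintype.card ι : ℤ))) _).mul hprod).congr' ?_ ?_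
  · filter_upwards [self_mem_nhdsWithin] with ε (hε : ε ≠ 0)
    simp only [prod_mul_distrib, prod_const, card_univ, prod_inv_distrib, ← sum_div,
      sum_neg_distrib, zpow_neg, zpow_natCast]
    field_simp
    ring
  · filter_upwards [self_mem_nhdsWithin] with ε (hε : ε ≠ 0)
    rw [zpow_sub₀ hε, zpow_neg, zpow_natCast, zpow_ofNat, div_eq_mul_inv, mul_comm]

/-- Two-term semiclassical expansion of
`Φ_ε(x) = Σ_{σ∈S_m} Π_j (e^{ε S_j^σ} - 1)⁻¹`, `S_j^σ = x_{σ(1)}+⋯+x_{σ(j)}`: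
`Φ_ε = ε^{-m} Σ_σ [ (Π_j S_j^σ)⁻¹ - (ε/2) Σ_r S_r^σ / Π_j S_j^σ ] + O(ε^{2-m})`. -/
theorem stmt_6 (m : ℕ) (x : Fin m → ℕ) (hx : ∀ i, 0 < x i) :
    (fun ε : ℝ =>
        (∑ σ : Equiv.Perm (Fin m), ∏ j : Fin m,
          (Real.exp (ε * ((∑ i ∈ Finset.univ.filter (· ≤ j), x (σ i) : ℕ) : ℝ)) - 1)⁻¹)
        - ε ^ (-(m : ℤ)) *
          ∑ σ : Equiv.Perm (Fin m),
            ((∏ j : Fin m, ((∑ i ∈ Finset.univ.filter (· ≤ j), x (σ i) : ℕ) : ℝ))⁻¹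
              - ε / 2 *
                ∑ r : Fin m, ((∑ i ∈ Finset.univ.filter (· ≤ r), x (σ i) : ℕ) : ℝ)
                  / ∏ j : Fin m, ((∑ i ∈ Finset.univ.filter (· ≤ j), x (σ i) : ℕ) : ℝ)))
      =O[𝓝[>] 0] fun ε : ℝ => ε ^ ((2 : ℤ) - m) := by
  have hS (σ : Equiv.Perm (Fin m)) (j : Fin m) :
      ((∑ i ∈ univ.filter (· ≤ j), x (σ i) : ℕ) : ℝ) ≠ 0 := by
    have : 0 < ∑ i ∈ univ.filter (· ≤ j), x (σ i) := sum_pos (fun i _ => hx (σ i)) ⟨j, by simp⟩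
    positivity
  have h := IsBigO.sum fun σ (_ : σ ∈ univ) =>
    (isBigO_prod_inv_exp_mul_sub_one _ (hS σ)).mono (nhdsGT_le_nhdsNE 0)
  simp only [Fintype.card_fin] at h
  refine h.congr_left fun ε => ?_
  rw [Finset.sum_apply, mul_sum, ← sum_sub_distrib]
end

section
/- For fixed z, with q = e^{-ε}, lim_{ε→0⁺} Σ_{m=1}^∞ (εz)^m / (m(1 − e^{-εm})) = z. -/
open Filter Topology

lemma aux_exp (x : ℝ) (hx : 0 ≤ x) : x * Real.exp (-x) ≤ 1 - Real.exp (-x) := by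
  have h1 : Real.exp x * Real.exp (-x) = 1 := by rw [← Real.exp_add]; simp
  nlinarith [Real.add_one_le_exp x, Real.exp_pos (-x)]

lemma aux_bound (z ε : ℝ) (hε : 0 < ε) (m : ℕ) :
    |(ε * z) ^ (m + 1) / (((m : ℝ) + 1) * (1 - Real.exp (-(ε * ((m : ℝ) + 1)))))|
      ≤ (|z| * Real.exp ε) * (ε * |z| * Real.exp ε) ^ m := by
  set x : ℝ := ε * ((m : ℝ) + 1) with hxdef
  have hm1 : (1:ℝ) ≤ (m : ℝ) + 1 := by have := Nat.cast_nonneg (α := ℝ) m; linarith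
  have hx : 0 < x := by positivity
  have hE : 0 < Real.exp (-x) := Real.exp_pos _
  have hden : 0 < 1 - Real.exp (-x) := by
    have := Real.exp_lt_one_iff.mpr (neg_neg_iff_pos.mpr hx)
    linarith
  have hD : 0 < ((m : ℝ) + 1) * (1 - Real.exp (-x)) := by positivity
  have hD' : 0 < ε * Real.exp (-x) := by positivity
  have hDD : ε * Real.exp (-x) ≤ ((m : ℝ) + 1) * (1 - Real.exp (-x)) := by
    have h1 := aux_exp x hx.le
    nlinarith [mul_le_mul_of_nonneg_left h1 (by linarith : (0:ℝ) ≤ (m : ℝ) + 1),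
      mul_pos hε hE]
  have habs : |(ε * z) ^ (m + 1) / (((m : ℝ) + 1) * (1 - Real.exp (-x)))|
      = (ε * |z|) ^ (m + 1) / (((m : ℝ) + 1) * (1 - Real.exp (-x))) := by
    rw [abs_div, abs_pow, abs_mul, abs_of_pos hε, abs_of_pos hD]
  rw [habs]
  have step : (ε * |z|) ^ (m + 1) / (((m : ℝ) + 1) * (1 - Real.exp (-x)))
      ≤ (ε * |z|) ^ (m + 1) / (ε * Real.exp (-x)) := by
    gcongr
  refine step.trans (le_of_eq ?_)
  have hexp : Real.exp x = Real.exp ε ^ (m + 1) := by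
    rw [hxdef, show ε * ((m : ℝ) + 1) = ((m + 1 : ℕ) : ℝ) * ε by push_cast; ring,
      Real.exp_nat_mul]
  rw [Real.exp_neg]
  rw [div_eq_iff (by positivity : ε * (Real.exp x)⁻¹ ≠ 0)]
  rw [hexp]
  field_simp
  ring

lemma aux_summable (z ε : ℝ) (hε : 0 < ε) (hr : ε * |z| * Real.exp ε < 1) :
    Summable (fun m : ℕ => (ε * z) ^ (m + 1)
      / (((m : ℝ) + 1) * (1 - Real.exp (-(ε * ((m : ℝ) + 1)))))) := by
  apply Summable.of_norm_bounded
    (g := fun m : ℕ => (|z| * Real.exp ε) * (ε * |z| * Real.exp ε) ^ m)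
  · exact (summable_geometric_of_lt_one (by positivity) hr).mul_left _
  · intro m
    exact aux_bound z ε hε m

lemma aux_tail (z : ℝ) :
    Tendsto (fun ε : ℝ =>
        ∑' m : ℕ, (ε * z) ^ (m + 1 + 1)
          / (((m : ℝ) + 1 + 1) * (1 - Real.exp (-(ε * ((m : ℝ) + 1 + 1))))))
      (𝓝[>] 0) (𝓝 0) := by
  have hC : Tendsto (fun ε : ℝ => 18 * (z ^ 2 + 1) * ε) (𝓝[>] 0) (𝓝 0) := by
    have : Tendsto (fun ε : ℝ => 18 * (z ^ 2 + 1) * ε) (𝓝 0) (𝓝 0) := by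
      simpa using (tendsto_id (x := 𝓝 (0:ℝ))).const_mul (18 * (z ^ 2 + 1))
    exact this.mono_left nhdsWithin_le_nhds
  apply squeeze_zero_norm' _ hC
  filter_upwards [Ioo_mem_nhdsGT_of_mem
    (Set.mem_Ico.mpr ⟨le_refl (0:ℝ), by positivity ⟩ :
      (0:ℝ) ∈ Set.Ico 0 (min 1 (1 / (6 * (|z| + 1)))))] with ε hε
  obtain ⟨hε0, hεlt⟩ := hε
  have hε1 : ε ≤ 1 := le_of_lt (lt_of_lt_of_le hεlt (min_le_left _ _))
  have hεz : ε ≤ 1 / (6 * (|z| + 1)) := le_of_lt (lt_of_lt_of_le hεlt (min_le_right _ _))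
  have hexpε : Real.exp ε ≤ 3 := by
    calc Real.exp ε ≤ Real.exp 1 := Real.exp_le_exp.mpr hε1
    _ ≤ 3 := by have := Real.exp_one_lt_d9; linarith
  set r : ℝ := ε * |z| * Real.exp ε with hrdef
  have hr0 : 0 ≤ r := by positivity
  have habs : 0 ≤ |z| := abs_nonneg z
  have hεz' : ε * (6 * (|z| + 1)) ≤ 1 := by
    have h6 : (0:ℝ) < 6 * (|z| + 1) := by positivity
    exact (le_div_iff₀ h6).mp hεz
  have hrhalf : r ≤ 1 / 2 := by
    have h1 : r ≤ ε * |z| * 3 := by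
      rw [hrdef]; gcongr
    nlinarith [mul_nonneg hε0.le habs]
  have hr1 : r < 1 := lt_of_le_of_lt hrhalf (by norm_num)
  -- termwise bound
  have hbound : ∀ m : ℕ, ‖(ε * z) ^ (m + 1 + 1)
      / (((m : ℝ) + 1 + 1) * (1 - Real.exp (-(ε * ((m : ℝ) + 1 + 1)))))‖
      ≤ ((|z| * Real.exp ε) * r) * r ^ m := by
    intro m
    have := aux_bound z ε hε0 (m + 1)
    rw [Real.norm_eq_abs]
    push_cast at this ⊢
    calc _ ≤ (|z| * Real.exp ε) * r ^ (m + 1) := by convert this using 2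
      _ = ((|z| * Real.exp ε) * r) * r ^ m := by ring
  have hgsum : Summable (fun m : ℕ => ((|z| * Real.exp ε) * r) * r ^ m) :=
    (summable_geometric_of_lt_one hr0 hr1).mul_left _
  calc ‖∑' m : ℕ, (ε * z) ^ (m + 1 + 1)
        / (((m : ℝ) + 1 + 1) * (1 - Real.exp (-(ε * ((m : ℝ) + 1 + 1)))))‖
      ≤ ∑' m : ℕ, ((|z| * Real.exp ε) * r) * r ^ m :=
        tsum_of_norm_bounded hgsum.hasSum hbound
    _ = ((|z| * Real.exp ε) * r) * (1 - r)⁻¹ := by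
        rw [tsum_mul_left, tsum_geometric_of_lt_one hr0 hr1]
    _ ≤ 18 * (z ^ 2 + 1) * ε := by
        have hinv : (1 - r)⁻¹ ≤ 2 := by
          rw [inv_le_iff_one_le_mul₀ (by linarith)]
          linarith
        have hEpos : (0:ℝ) < Real.exp ε := Real.exp_pos ε
        have hz2 : |z| * |z| = z ^ 2 := by rw [abs_mul_abs_self]; ring
        have step1 : (|z| * Real.exp ε) * r * (1 - r)⁻¹ ≤ (|z| * Real.exp ε) * r * 2 := by
          have : (0:ℝ) ≤ (|z| * Real.exp ε) * r := by positivity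
          exact mul_le_mul_of_nonneg_left hinv this
        refine step1.trans ?_
        have hE2 : Real.exp ε * Real.exp ε ≤ 9 := by nlinarith
        rw [hrdef]
        have key : ε * (|z| * |z|) * (Real.exp ε * Real.exp ε) ≤ ε * (|z| * |z|) * 9 :=
          mul_le_mul_of_nonneg_left hE2 (mul_nonneg hε0.le (mul_nonneg habs habs))
        nlinarith [mul_nonneg hε0.le (sq_nonneg z), sq_nonneg z, hε0.le,
          mul_le_mul_of_nonneg_right (le_of_eq hz2) hε0.le,
          mul_le_mul_of_nonneg_right (le_of_eq hz2.symm) hε0.le]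

lemma aux_first (z : ℝ) :
    Tendsto (fun ε : ℝ => ε * z / (1 - Real.exp (-ε))) (𝓝[>] 0) (𝓝 z) := by
  have hderiv : Tendsto (fun x : ℝ => (Real.exp x - 1) / x) (𝓝[≠] 0) (𝓝 1) := by
    have h := Real.hasDerivAt_exp 0
    rw [hasDerivAt_iff_tendsto_slope] at h
    simpa [slope_fun_def, Real.exp_zero, div_eq_inv_mul] using h
  have hneg : Tendsto (fun ε : ℝ => -ε) (𝓝[>] (0:ℝ)) (𝓝[≠] (0:ℝ)) := by
    apply tendsto_nhdsWithin_of_tendsto_nhds_of_eventually_within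
    · have : Tendsto (fun ε : ℝ => -ε) (𝓝 (0:ℝ)) (𝓝 (0:ℝ)) := by
        simpa using (continuous_neg (G := ℝ)).tendsto 0
      exact this.mono_left nhdsWithin_le_nhds
    · filter_upwards [self_mem_nhdsWithin] with ε (hε : 0 < ε)
      simpa using ne_of_lt (neg_neg_iff_pos.mpr hε)
  have h1 : Tendsto (fun ε : ℝ => (1 - Real.exp (-ε)) / ε) (𝓝[>] 0) (𝓝 1) := by
    have := hderiv.comp hneg
    refine this.congr fun ε => ?_
    show (Real.exp (-ε) - 1) / (-ε) = (1 - Real.exp (-ε)) / ε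
    rw [div_neg, ← neg_div, neg_sub]
  have h2 : Tendsto (fun ε : ℝ => z * ((1 - Real.exp (-ε)) / ε)⁻¹) (𝓝[>] 0) (𝓝 z) := by
    have := tendsto_const_nhds (x := z) (f := 𝓝[>] (0:ℝ)) |>.mul (h1.inv₀ one_ne_zero)
    simpa using this
  refine h2.congr' ?_
  filter_upwards [self_mem_nhdsWithin] with ε (hε : 0 < ε)
  have hd : 0 < 1 - Real.exp (-ε) := by
    have := Real.exp_lt_one_iff.mpr (neg_neg_iff_pos.mpr hε)
    linarith
  field_simp

/-- Semiclassical limit of the quantum dilogarithm: with `q = e^{-ε}`,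
`lim_{ε→0⁺} Σ_{m≥1} (εz)^m / (m(1 - e^{-εm})) = z`. -/
theorem stmt_12 (z : ℝ) :
    Tendsto (fun ε : ℝ =>
        ∑' m : ℕ, (ε * z) ^ (m + 1)
          / (((m : ℝ) + 1) * (1 - Real.exp (-(ε * ((m : ℝ) + 1))))))
      (𝓝[>] 0) (𝓝 z) := by
  have h0 : Tendsto (fun ε : ℝ => (ε * z) ^ (0 + 1)
      / (((0 : ℕ) + 1 : ℝ) * (1 - Real.exp (-(ε * ((0 : ℕ) + 1 : ℝ)))))) (𝓝[>] 0) (𝓝 z) := by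
    refine (aux_first z).congr fun ε => ?_
    norm_num
  have htail := aux_tail z
  have hsum : Tendsto (fun ε : ℝ => (ε * z) ^ (0 + 1)
      / (((0 : ℕ) + 1 : ℝ) * (1 - Real.exp (-(ε * ((0 : ℕ) + 1 : ℝ)))))
      + ∑' m : ℕ, (ε * z) ^ (m + 1 + 1)
          / (((m : ℝ) + 1 + 1) * (1 - Real.exp (-(ε * ((m : ℝ) + 1 + 1))))))
      (𝓝[>] 0) (𝓝 (z + 0)) := h0.add htail
  rw [add_zero] at hsum
  refine hsum.congr' ?_
  filter_upwards [Ioo_mem_nhdsGT_of_mem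
    (Set.mem_Ico.mpr ⟨le_refl (0:ℝ), by positivity⟩ :
      (0:ℝ) ∈ Set.Ico 0 (min 1 (1 / (6 * (|z| + 1)))))] with ε hε
  obtain ⟨hε0, hεlt⟩ := hε
  have hε1 : ε ≤ 1 := le_of_lt (lt_of_lt_of_le hεlt (min_le_left _ _))
  have hεz : ε ≤ 1 / (6 * (|z| + 1)) := le_of_lt (lt_of_lt_of_le hεlt (min_le_right _ _))
  have hexpε : Real.exp ε ≤ 3 := by
    calc Real.exp ε ≤ Real.exp 1 := Real.exp_le_exp.mpr hε1
    _ ≤ 3 := by have := Real.exp_one_lt_d9; linarith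
  have hr1 : ε * |z| * Real.exp ε < 1 := by
    have h6 : (0:ℝ) < 6 * (|z| + 1) := by positivity
    have hεz' : ε * (6 * (|z| + 1)) ≤ 1 := (le_div_iff₀ h6).mp hεz
    have hk : ε * |z| * Real.exp ε ≤ ε * |z| * 3 :=
      mul_le_mul_of_nonneg_left hexpε (mul_nonneg hε0.le (abs_nonneg z))
    nlinarith [abs_nonneg z, hk]
  have hS := aux_summable z ε hε0 hr1
  have := Summable.tsum_eq_zero_add hS
  rw [this]
  push_cast
  ring_nf
end

section
/- For fixed z ∈ ℝ and q = e^{-ε}, lim_{ε→0⁺} Π_{k=1}^∞ (1 + e^{-εk}·εz) = e^z. -/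
/-!
Taking logarithms, `log (1 + t) = t + O(t²)` for `|t| ≤ 1/2`, so `log ∏ (1 + tₖ)` differs from
`∑ tₖ` by at most `2 ∑ tₖ²`. For `tₖ = e^{-ε(k+1)} ε z` both sums are geometric:
`∑ tₖ = z · ε / (e^ε - 1) → z` and `∑ tₖ² = (εz)² / (e^{2ε} - 1) ≤ ε z² / 2 → 0`.
-/

open Filter Topology

namespace Real

lemma abs_log_one_add_sub_self_le {t : ℝ} (ht : |t| ≤ 1 / 2) :
    |log (1 + t) - t| ≤ 2 * t ^ 2 := by
  have hpos : 0 < 1 - |t| := by linarith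
  calc |log (1 + t) - t| ≤ |t| ^ 2 / (1 - |t|) := by
        simpa [sub_eq_neg_add, add_comm] using
          abs_log_sub_add_sum_range_le (x := -t) (by rw [abs_neg]; linarith) 1
    _ ≤ 2 * t ^ 2 := by
      rw [div_le_iff₀ hpos, sq_abs]
      nlinarith [mul_nonneg (sq_nonneg t) (by linarith : 0 ≤ 1 - 2 * |t|)]

lemma abs_tsum_log_one_add_sub_tsum_le {ι : Type*} {t : ι → ℝ} (hs : Summable t)
    (ht : ∀ i, |t i| ≤ 1 / 2) :
    |∑' i, log (1 + t i) - ∑' i, t i| ≤ 2 * ∑' i, t i ^ 2 := by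
  have hsq : Summable fun i => t i ^ 2 :=
    hs.abs.of_nonneg_of_le (fun i => sq_nonneg _) fun i => by
      rw [← sq_abs]; nlinarith [abs_nonneg (t i), ht i]
  have hlog := summable_log_one_add_of_summable hs
  have hb i := abs_le.1 (abs_log_one_add_sub_self_le (ht i))
  rw [← hlog.tsum_sub hs, ← tsum_mul_left, abs_le, ← tsum_neg]
  exact ⟨(hsq.mul_left 2).neg.tsum_le_tsum (fun i => (hb i).1) (hlog.sub hs),
    (hlog.sub hs).tsum_le_tsum (fun i => (hb i).2) (hsq.mul_left 2)⟩

theorem tendsto_tprod_one_add_of_tendsto_tsum {α ι : Type*} {l : Filter α}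
    {t : α → ι → ℝ} {s : ℝ} (hsmall : ∀ᶠ a in l, Summable (t a) ∧ ∀ i, |t a i| ≤ 1 / 2)
    (hsum : Tendsto (fun a => ∑' i, t a i) l (𝓝 s))
    (hsq : Tendsto (fun a => ∑' i, t a i ^ 2) l (𝓝 0)) :
    Tendsto (fun a => ∏' i, (1 + t a i)) l (𝓝 (exp s)) := by
  have hlog : Tendsto (fun a => ∑' i, log (1 + t a i)) l (𝓝 s) := by
    have hdiff : Tendsto (fun a => ∑' i, log (1 + t a i) - ∑' i, t a i) l (𝓝 0) :=
      squeeze_zero_norm' (hsmall.mono fun a ha => abs_tsum_log_one_add_sub_tsum_le ha.1 ha.2)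
        (by simpa using hsq.const_mul 2)
    simpa using hdiff.add hsum
  refine hlog.rexp.congr' (hsmall.mono fun a ⟨hs, ht⟩ => ?_)
  exact rexp_tsum_eq_tprod (fun i => by linarith [(abs_le.1 (ht i)).1])
    (summable_log_one_add_of_summable hs)

lemma hasSum_exp_neg_mul_succ_mul {ε : ℝ} (hε : 0 < ε) (w : ℝ) :
    HasSum (fun k : ℕ => exp (-(ε * ((k : ℝ) + 1))) * w) (w / (exp ε - 1)) := by
  have hr : exp (-ε) < 1 := exp_lt_one_iff.2 (neg_lt_zero.2 hε)
  have hterm : (fun k : ℕ => exp (-(ε * ((k : ℝ) + 1))) * w) =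
      fun k => exp (-ε) * w * exp (-ε) ^ k := by
    funext k
    rw [mul_right_comm, ← exp_nat_mul, ← exp_add]
    ring_nf
  have hval : w / (exp ε - 1) = exp (-ε) * w * (1 - exp (-ε))⁻¹ := by
    have : exp ε - 1 ≠ 0 := (sub_pos.2 (one_lt_exp_iff.2 hε)).ne'
    rw [exp_neg]
    field_simp
  rw [hterm, hval]
  exact (hasSum_geometric_of_lt_one (exp_pos _).le hr).mul_left _

lemma tsum_sq_exp_neg_mul_succ_mul_le {ε : ℝ} (hε : 0 < ε) (w : ℝ) :
    ∑' k : ℕ, (exp (-(ε * ((k : ℝ) + 1))) * w) ^ 2 ≤ w ^ 2 / (2 * ε) := by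
  have hsq : (fun k : ℕ => (exp (-(ε * ((k : ℝ) + 1))) * w) ^ 2) =
      fun k : ℕ => exp (-(2 * ε * ((k : ℝ) + 1))) * w ^ 2 := by
    ext k
    rw [mul_pow, ← exp_nat_mul]
    ring_nf
  rw [hsq, (hasSum_exp_neg_mul_succ_mul (by positivity) _).tsum_eq]
  gcongr
  linarith [add_one_le_exp (2 * ε)]

lemma tendsto_div_exp_sub_one : Tendsto (fun x : ℝ => x / (exp x - 1)) (𝓝[≠] 0) (𝓝 1) := by
  have h := ((hasDerivAt_exp 0).tendsto_slope_zero).inv₀ (by simp)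
  simp only [zero_add, exp_zero, smul_eq_mul, inv_one] at h
  refine h.congr fun x => ?_
  rw [mul_inv, inv_inv, div_eq_mul_inv]

end Real

open Real

/-- Classical limit of `E'(q,w) = Π_{k≥1}(1 + q^k w)`: with `q = e^{-ε}`,
`lim_{ε→0⁺} Π_{k≥1}(1 + e^{-εk} ε z) = e^z`. -/
theorem stmt_13 (z : ℝ) :
    Tendsto (fun ε : ℝ => ∏' k : ℕ, (1 + Real.exp (-(ε * ((k : ℝ) + 1))) * (ε * z)))
      (𝓝[>] 0) (𝓝 (Real.exp z)) := by
  have hpos : ∀ᶠ ε in 𝓝[>] (0 : ℝ), 0 < ε := self_mem_nhdsWithin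
  have hsmall : ∀ᶠ ε in 𝓝[>] (0 : ℝ), |ε * z| ≤ 1 / 2 := by
    have h : Tendsto (fun ε : ℝ => |ε * z|) (𝓝[>] 0) (𝓝 0) :=
      (Continuous.tendsto' (by fun_prop) 0 0 (by simp)).mono_left nhdsWithin_le_nhds
    exact h.eventually_le_const (by norm_num)
  apply tendsto_tprod_one_add_of_tendsto_tsum
  · filter_upwards [hpos, hsmall] with ε hε hεz
    refine ⟨(hasSum_exp_neg_mul_succ_mul hε _).summable, fun k => ?_⟩
    rw [abs_mul, abs_of_pos (exp_pos _)]
    have hk : exp (-(ε * ((k : ℝ) + 1))) ≤ 1 := exp_le_one_iff.2 (neg_nonpos.2 (by positivity))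
    exact (mul_le_of_le_one_left (abs_nonneg _) hk).trans hεz
  · have hlim : Tendsto (fun ε : ℝ => z * (ε / (exp ε - 1))) (𝓝[>] 0) (𝓝 z) := by
      simpa using (tendsto_div_exp_sub_one.mono_left (nhdsGT_le_nhdsNE 0)).const_mul z
    refine hlim.congr' (hpos.mono fun ε hε => ?_)
    dsimp only
    rw [(hasSum_exp_neg_mul_succ_mul hε _).tsum_eq]
    ring
  · have hlim : Tendsto (fun ε : ℝ => ε * z ^ 2 / 2) (𝓝[>] 0) (𝓝 0) :=
      (Continuous.tendsto' (by fun_prop) 0 0 (by simp)).mono_left nhdsWithin_le_nhds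
    refine squeeze_zero' (Eventually.of_forall fun ε => tsum_nonneg fun k => sq_nonneg _)
      (hpos.mono fun ε hε => ?_) hlim
    convert tsum_sq_exp_neg_mul_succ_mul_le hε (ε * z) using 1
    field_simp
end

section
/- For fixed z ∈ ℝ with the product convergent, with q = e^{-ε}, lim_{ε→0⁺} Π_{k=0}^∞ (1 − e^{-εk}·εz)^{-1} = e^z. -/
open Filter Topology

private lemma slope_aux (c : ℝ) (hc : 0 < c) :
    Tendsto (fun ε : ℝ => ε / (1 - Real.exp (-(c * ε)))) (𝓝[>] 0) (𝓝 c⁻¹) := by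
  have hd : HasDerivAt (fun x : ℝ => 1 - Real.exp (-(c * x))) c 0 := by
    have h1 : HasDerivAt (fun x : ℝ => -(c * x)) (-c) 0 := by
      simpa using ((hasDerivAt_id (0:ℝ)).const_mul c).fun_neg
    have h2 := h1.exp
    simpa using (h2.const_sub 1)
  rw [hasDerivAt_iff_tendsto_slope] at hd
  have hslope : Tendsto (fun ε : ℝ => (1 - Real.exp (-(c * ε))) / ε) (𝓝[>] 0) (𝓝 c) := by
    have := hd.mono_left (nhdsWithin_mono 0 (by intro x hx; exact ne_of_gt hx))
    refine this.congr fun ε => ?_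
    simp [slope_def_field]
  have := hslope.inv₀ (ne_of_gt hc)
  refine this.congr fun ε => ?_
  rw [inv_div]

private lemma key_bounds (z ε : ℝ) (hε : 0 < ε) (hz : ε * |z| ≤ 1 / 2) :
    Real.exp ((ε / (1 - Real.exp (-(1 * ε)))) * z) ≤
      (∏' k : ℕ, (1 - Real.exp (-(ε * (k : ℝ))) * (ε * z))⁻¹) ∧
    (∏' k : ℕ, (1 - Real.exp (-(ε * (k : ℝ))) * (ε * z))⁻¹) ≤
      Real.exp ((ε / (1 - Real.exp (-(1 * ε)))) * z +
        2 * ((ε / (1 - Real.exp (-(2 * ε)))) * (ε * z ^ 2))) := by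
  have x : ℕ → ℝ := fun k => Real.exp (-(ε * (k : ℝ))) * (ε * z)
  set x : ℕ → ℝ := fun k => Real.exp (-(ε * (k : ℝ))) * (ε * z) with hxdef
  set r : ℝ := Real.exp (-ε) with hrdef
  have hr0 : 0 ≤ r := Real.exp_nonneg _
  have hr1 : r < 1 := by
    rw [hrdef, Real.exp_lt_one_iff]; linarith
  have hxr : ∀ k, x k = r ^ k * (ε * z) := by
    intro k
    rw [hxdef, hrdef, ← Real.exp_nat_mul]
    ring_nf
  have hxabs : ∀ k, |x k| ≤ 1 / 2 := by
    intro k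
    rw [hxr k, abs_mul, abs_pow, abs_of_nonneg hr0, abs_mul, abs_of_nonneg hε.le]
    calc r ^ k * (ε * |z|) ≤ 1 * (ε * |z|) := by
          apply mul_le_mul_of_nonneg_right (pow_le_one₀ hr0 hr1.le) (by positivity)
      _ ≤ 1 / 2 := by linarith
  have h1x : ∀ k, 0 < 1 - x k := by
    intro k; have := hxabs k; have := abs_le.1 this; linarith [this.2]
  -- per-term log bounds
  have hlb : ∀ k, x k ≤ -Real.log (1 - x k) := by
    intro k
    have := Real.log_le_sub_one_of_pos (h1x k)
    linarith
  have hub : ∀ k, -Real.log (1 - x k) ≤ x k + 2 * x k ^ 2 := by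
    intro k
    have hx1 : |x k| < 1 := lt_of_le_of_lt (hxabs k) (by norm_num)
    have h := Real.abs_log_sub_add_sum_range_le hx1 1
    simp [Finset.sum_range_one] at h
    have h2 : x k ^ 2 / (1 - |x k|) ≤ 2 * x k ^ 2 := by
      have hden : (1:ℝ)/2 ≤ 1 - |x k| := by have := hxabs k; linarith
      rw [div_le_iff₀ (by linarith)]
      nlinarith [sq_nonneg (x k)]
    have := abs_le.1 h
    linarith [this.1, this.2, h2]
  -- geometric sums
  have hgeo : HasSum (fun k : ℕ => r ^ k) (1 - r)⁻¹ := hasSum_geometric_of_lt_one hr0 hr1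
  have hsx : HasSum x ((1 - r)⁻¹ * (ε * z)) := by
    have := hgeo.mul_right (ε * z)
    refine this.congr_fun fun k => hxr k
  have hgeo2 : HasSum (fun k : ℕ => (r ^ 2) ^ k) (1 - r ^ 2)⁻¹ :=
    hasSum_geometric_of_lt_one (by positivity) (by nlinarith)
  have hsx2 : HasSum (fun k => x k ^ 2) ((1 - r ^ 2)⁻¹ * (ε * z) ^ 2) := by
    have := hgeo2.mul_right ((ε * z) ^ 2)
    refine this.congr_fun fun k => ?_
    rw [hxr k, mul_pow, ← pow_mul, ← pow_mul, mul_comm 2 k]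
  -- summability of the logs
  have hsl : Summable fun k => -Real.log (1 - x k) := by
    apply Summable.of_norm_bounded (g := fun k => |x k| + 2 * x k ^ 2)
      (hsx.summable.abs.add (hsx2.summable.mul_left 2))
    intro k
    rw [Real.norm_eq_abs, abs_le]
    constructor
    · have := hlb k
      have hx := neg_abs_le (x k)
      nlinarith [sq_nonneg (x k)]
    · have := hub k
      have hx := le_abs_self (x k)
      linarith
  -- the product equals exp of the sum of logs
  have hprod : HasProd (fun k => (1 - x k)⁻¹)
      (Real.exp (∑' k, -Real.log (1 - x k))) := by
    have h := hsl.hasSum.rexp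
    refine h.congr fun s => Finset.prod_congr rfl fun k _ => ?_
    simp only [Function.comp_apply]
    rw [Real.exp_neg, Real.exp_log (h1x k)]
  have htp : (∏' k, (1 - x k)⁻¹) = Real.exp (∑' k, -Real.log (1 - x k)) := hprod.tprod_eq
  -- bounds on the sum of logs
  have hsum_lb : (1 - r)⁻¹ * (ε * z) ≤ ∑' k, -Real.log (1 - x k) := by
    rw [← hsx.tsum_eq]
    exact Summable.tsum_le_tsum hlb hsx.summable hsl
  have hsum_ub : (∑' k, -Real.log (1 - x k)) ≤
      (1 - r)⁻¹ * (ε * z) + 2 * ((1 - r ^ 2)⁻¹ * (ε * z) ^ 2) := by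
    have hS : HasSum (fun k => x k + 2 * x k ^ 2)
        ((1 - r)⁻¹ * (ε * z) + 2 * ((1 - r ^ 2)⁻¹ * (ε * z) ^ 2)) :=
      hsx.add (hsx2.mul_left 2)
    rw [← hS.tsum_eq]
    exact Summable.tsum_le_tsum hub hsl hS.summable
  -- rewrite the constants
  have hr1e : 1 - r ≠ 0 := by linarith
  have hA : (1 - r)⁻¹ * (ε * z) = (ε / (1 - Real.exp (-(1 * ε)))) * z := by
    rw [one_mul, ← hrdef]; field_simp
  have hr2 : r ^ 2 = Real.exp (-(2 * ε)) := by
    rw [hrdef, sq, ← Real.exp_add]; ring_nf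
  have hr2e : 1 - r ^ 2 ≠ 0 := by nlinarith
  have hB : (1 - r ^ 2)⁻¹ * (ε * z) ^ 2 = (ε / (1 - Real.exp (-(2 * ε)))) * (ε * z ^ 2) := by
    rw [← hr2]; field_simp
  constructor
  · rw [htp, ← hA]
    exact Real.exp_le_exp.2 hsum_lb
  · rw [htp, ← hA, ← hB]
    exact Real.exp_le_exp.2 hsum_ub

/-- Classical limit of `H(q,w) = Π_{k≥0}(1 - q^k w)⁻¹`: with `q = e^{-ε}`,
`lim_{ε→0⁺} Π_{k≥0}(1 - e^{-εk} ε z)⁻¹ = e^z`. -/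
theorem stmt_14 (z : ℝ) :
    Tendsto (fun ε : ℝ => ∏' k : ℕ, (1 - Real.exp (-(ε * (k : ℝ))) * (ε * z))⁻¹)
      (𝓝[>] 0) (𝓝 (Real.exp z)) := by
  have hmem : ∀ᶠ ε in 𝓝[>] (0:ℝ), 0 < ε ∧ ε * |z| ≤ 1 / 2 := by
    have hδ : (0:ℝ) < (2 * (|z| + 1))⁻¹ := by positivity
    filter_upwards [Ioo_mem_nhdsGT_of_mem (Set.mem_Ico.2 ⟨le_refl 0, hδ⟩)] with ε hε
    refine ⟨hε.1, ?_⟩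
    have h1 : ε ≤ (2 * (|z| + 1))⁻¹ := hε.2.le
    have h2 : ε * |z| ≤ (2 * (|z| + 1))⁻¹ * (|z| + 1) :=
      mul_le_mul h1 (by linarith [abs_nonneg z]) (abs_nonneg z) (by positivity)
    have h3 : (2 * (|z| + 1))⁻¹ * (|z| + 1) ≤ 1 / 2 := by
      rw [inv_mul_eq_div, div_le_div_iff₀ (by positivity) (by norm_num)]
      nlinarith [abs_nonneg z]
    linarith
  -- limits of the bounding functions
  have hA : Tendsto (fun ε : ℝ => (ε / (1 - Real.exp (-(1 * ε)))) * z) (𝓝[>] 0)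
      (𝓝 z) := by
    have := (slope_aux 1 one_pos).mul_const z
    simpa using this
  have hB : Tendsto (fun ε : ℝ => (ε / (1 - Real.exp (-(2 * ε)))) * (ε * z ^ 2)) (𝓝[>] 0)
      (𝓝 0) := by
    have h1 := slope_aux 2 two_pos
    have h2 : Tendsto (fun ε : ℝ => ε * z ^ 2) (𝓝[>] 0) (𝓝 0) := by
      have : Tendsto (fun ε : ℝ => ε * z ^ 2) (𝓝 0) (𝓝 (0 * z ^ 2)) :=
        (continuous_id.mul continuous_const).tendsto 0
      simpa using this.mono_left nhdsWithin_le_nhds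
    simpa using h1.mul h2
  have hlo : Tendsto (fun ε : ℝ => Real.exp ((ε / (1 - Real.exp (-(1 * ε)))) * z)) (𝓝[>] 0)
      (𝓝 (Real.exp z)) := hA.rexp
  have hhi : Tendsto (fun ε : ℝ => Real.exp ((ε / (1 - Real.exp (-(1 * ε)))) * z +
      2 * ((ε / (1 - Real.exp (-(2 * ε)))) * (ε * z ^ 2)))) (𝓝[>] 0)
      (𝓝 (Real.exp z)) := by
    have := (hA.add (hB.const_mul 2)).rexp
    simpa using this
  refine tendsto_of_tendsto_of_tendsto_of_le_of_le' hlo hhi ?_ ?_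
  · filter_upwards [hmem] with ε hε
    exact (key_bounds z ε hε.1 hε.2).1
  · filter_upwards [hmem] with ε hε
    exact (key_bounds z ε hε.1 hε.2).2
end

section
/- With notation as above, lim_{ε→0⁺} ε^d z_d(e^{-ε}) = 1/d!, where z_d(q) = Σ_{λ ⊢ d} p(λ)·w_{E'(q)}(λ). -/
open Filter Topology

/-- `Φ_{E'(q)}(x_1,…,x_m) = Σ_{σ∈S_m} Π_{j=1}^m (q^{-(x_{σ(1)}+⋯+x_{σ(j)})} - 1)⁻¹`,
applied to the entries of a list. -/
noncomputable def PhiEprime (q : ℝ) (l : List ℕ) : ℝ :=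
  ∑ σ : Equiv.Perm (Fin l.length), ∏ j : Fin l.length,
    (q ^ (-((∑ i ∈ Finset.univ.filter (· ≤ j), l.get (σ i) : ℕ) : ℤ)) - 1)⁻¹

/-- `w_{E'(q)}(λ) = Φ_{E'(q)}(λ_1,…,λ_ℓ) / |aut(λ)|`, with `|aut(λ)| = Π_i m_i(λ)!`. -/
noncomputable def wEprime (q : ℝ) {d : ℕ} (lam : Nat.Partition d) : ℝ :=
  PhiEprime q lam.parts.toList
    / (∏ i ∈ lam.parts.toFinset, Nat.factorial (lam.parts.count i) : ℕ)

/-- `p(λ) = Π_j p(λ_j)`, the product of the partition numbers of the parts. -/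
def pOfPartition {d : ℕ} (lam : Nat.Partition d) : ℕ :=
  (lam.parts.map fun k => Fintype.card (Nat.Partition k)).prod

/-- The partition function `z_d(q) = Σ_{λ ⊢ d} p(λ) w_{E'(q)}(λ)`. -/
noncomputable def zPartition (d : ℕ) (q : ℝ) : ℝ :=
  ∑ lam : Nat.Partition d, (pOfPartition lam : ℝ) * wEprime q lam

lemma exp_neg_zpow (ε : ℝ) (S : ℕ) : Real.exp (-ε) ^ (-(S:ℤ)) = Real.exp (S * ε) := by
  rw [zpow_neg, zpow_natCast, ← Real.exp_nat_mul,
    show (S:ℝ) * -ε = -(S*ε) by ring, Real.exp_neg, inv_inv]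

lemma tendsto_factor (S : ℕ) (hS : 0 < S) :
    Tendsto (fun ε : ℝ => ε * (Real.exp (S * ε) - 1)⁻¹) (𝓝[>] 0) (𝓝 ((S:ℝ)⁻¹)) := by
  have h : HasDerivAt (fun x : ℝ => Real.exp (S * x)) ((S:ℝ)) 0 := by
    simpa [Function.comp_def] using (Real.hasDerivAt_exp ((S:ℝ) * 0)).comp 0 ((hasDerivAt_id 0).const_mul (S:ℝ))
  have h2 := hasDerivAt_iff_tendsto_slope.mp h
  have h3 : Tendsto (fun x : ℝ => (Real.exp (S*x) - 1)/x) (𝓝[≠] (0:ℝ)) (𝓝 (S:ℝ)) := by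
    refine h2.congr fun x => ?_
    simp [slope_def_field]
  have h4 := h3.inv₀ (by positivity)
  have h5 : Tendsto (fun x : ℝ => x * (Real.exp (S*x) - 1)⁻¹) (𝓝[≠] (0:ℝ)) (𝓝 ((S:ℝ)⁻¹)) := by
    refine h4.congr fun x => ?_
    rw [inv_div, div_eq_mul_inv, mul_comm]
  exact h5.mono_left (nhdsWithin_mono 0 (fun x hx => ne_of_gt hx))

lemma sigma_term_tendsto (d : ℕ) (l : List ℕ) (hpos : ∀ x ∈ l, 0 < x) (hlen : l.length ≤ d)
    (σ : Equiv.Perm (Fin l.length)) :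
    Tendsto (fun ε : ℝ => ε ^ d * ∏ j : Fin l.length,
      (Real.exp (-ε) ^ (-((∑ i ∈ Finset.univ.filter (· ≤ j), l.get (σ i) : ℕ) : ℤ)) - 1)⁻¹)
      (𝓝[>] 0)
      (𝓝 (if l.length = d then
        ∏ j : Fin l.length, ((∑ i ∈ Finset.univ.filter (· ≤ j), l.get (σ i) : ℕ) : ℝ)⁻¹
        else 0)) := by
  have hSpos : ∀ j : Fin l.length,
      0 < (∑ i ∈ Finset.univ.filter (· ≤ j), l.get (σ i) : ℕ) := by
    intro j
    refine Finset.sum_pos' (fun i _ => Nat.zero_le _) ⟨j, ?_, hpos _ (List.get_mem l (σ j))⟩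
    simp
  have hfun : ∀ ε : ℝ, ε ^ d * ∏ j : Fin l.length,
      (Real.exp (-ε) ^ (-((∑ i ∈ Finset.univ.filter (· ≤ j), l.get (σ i) : ℕ) : ℤ)) - 1)⁻¹
      = ε ^ (d - l.length) * ∏ j : Fin l.length,
        (ε * (Real.exp ((∑ i ∈ Finset.univ.filter (· ≤ j), l.get (σ i) : ℕ) * ε) - 1)⁻¹) := by
    intro ε
    simp_rw [exp_neg_zpow, Finset.prod_mul_distrib, Finset.prod_const, Finset.card_univ,
      Fintype.card_fin]
    rw [← mul_assoc, ← pow_add, Nat.sub_add_cancel hlen]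
  have hprod : Tendsto (fun ε : ℝ => ∏ j : Fin l.length,
      (ε * (Real.exp ((∑ i ∈ Finset.univ.filter (· ≤ j), l.get (σ i) : ℕ) * ε) - 1)⁻¹))
      (𝓝[>] 0)
      (𝓝 (∏ j : Fin l.length, ((∑ i ∈ Finset.univ.filter (· ≤ j), l.get (σ i) : ℕ) : ℝ)⁻¹)) :=
    tendsto_finset_prod _ (fun j _ => tendsto_factor _ (hSpos j))
  have hpow : Tendsto (fun ε : ℝ => ε ^ (d - l.length)) (𝓝[>] (0:ℝ))
      (𝓝 (if l.length = d then 1 else 0)) := by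
    rcases eq_or_ne l.length d with h | h
    · simp [h]
    · have hk : 0 < d - l.length := Nat.sub_pos_of_lt (lt_of_le_of_ne hlen h)
      simp only [if_neg h]
      have := ((continuous_pow (d - l.length)).tendsto (0:ℝ)).mono_left
        (nhdsWithin_le_nhds (s := Set.Ioi (0:ℝ)))
      simpa [zero_pow hk.ne'] using this
  have hmul := hpow.mul hprod
  refine Tendsto.congr (fun ε => (hfun ε).symm) ?_
  rcases eq_or_ne l.length d with h | h
  · simpa [h] using hmul
  · simpa [h] using hmul

lemma card_le_sum_of_pos (s : Multiset ℕ) (h : ∀ x ∈ s, 0 < x) :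
    Multiset.card s ≤ s.sum := by
  simpa using Multiset.card_nsmul_le_sum (s := s) (a := 1) (fun x hx => h x hx)

/-- The partition `(1^d)`. -/
def part1 (d : ℕ) : Nat.Partition d where
  parts := Multiset.replicate d 1
  parts_pos := fun hi => by simp [Multiset.eq_of_mem_replicate hi]
  parts_sum := by simp [Multiset.sum_replicate]

lemma eq_part1_of_card {d : ℕ} (lam : Nat.Partition d) (h : Multiset.card lam.parts = d) :
    lam = part1 d := by
  have hall : ∀ b ∈ lam.parts, b = 1 := by
    intro b hb
    by_contra hb1
    have hb2 : 2 ≤ b := by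
      have := lam.parts_pos hb
      omega
    have hce : b ::ₘ lam.parts.erase b = lam.parts := Multiset.cons_erase hb
    have hsum : b + (lam.parts.erase b).sum = d := by
      conv_rhs => rw [← lam.parts_sum, ← hce]
      rw [Multiset.sum_cons]
    have hcard : Multiset.card (lam.parts.erase b) = d - 1 := by
      rw [Multiset.card_erase_of_mem hb, h]; rfl
    have hle : Multiset.card (lam.parts.erase b) ≤ (lam.parts.erase b).sum :=
      card_le_sum_of_pos _ (fun x hx => lam.parts_pos (Multiset.mem_of_mem_erase hx))
    have hd1 : 1 ≤ d := by
      have : 0 < Multiset.card lam.parts := Multiset.card_pos_iff_exists_mem.2 ⟨b, hb⟩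
      omega
    omega
  ext1
  rw [show lam.parts = Multiset.replicate (Multiset.card lam.parts) 1 from
    Multiset.eq_replicate_card.2 hall, h]
  rfl

lemma lam_tendsto (d : ℕ) (hd : 0 < d) (lam : Nat.Partition d) :
    Tendsto (fun ε : ℝ => ε ^ d * ((pOfPartition lam : ℝ) * wEprime (Real.exp (-ε)) lam))
      (𝓝[>] 0)
      (𝓝 (if lam = part1 d then 1 / (Nat.factorial d : ℝ) else 0)) := by
  set l := lam.parts.toList with hl
  have hpos : ∀ x ∈ l, 0 < x := fun x hx => lam.parts_pos (by rwa [Multiset.mem_toList] at hx)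
  have hcard : l.length = Multiset.card lam.parts := Multiset.length_toList _
  have hlen : l.length ≤ d := by
    rw [hcard]
    calc Multiset.card lam.parts ≤ lam.parts.sum :=
          card_le_sum_of_pos _ (fun x hx => lam.parts_pos hx)
      _ = d := lam.parts_sum
  set A : ℝ := ((∏ i ∈ lam.parts.toFinset, Nat.factorial (lam.parts.count i) : ℕ) : ℝ) with hA
  set N : ℝ := ∑ _σ : Equiv.Perm (Fin l.length), if l.length = d then
      ∏ j : Fin l.length,
        ((∑ i ∈ Finset.univ.filter (· ≤ j), l.get (_σ i) : ℕ) : ℝ)⁻¹ else 0 with hN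
  have hPhi : Tendsto (fun ε : ℝ => ε ^ d * PhiEprime (Real.exp (-ε)) l) (𝓝[>] 0) (𝓝 N) := by
    have := tendsto_finset_sum (Finset.univ : Finset (Equiv.Perm (Fin l.length)))
      (fun σ _ => sigma_term_tendsto d l hpos hlen σ)
    refine this.congr fun ε => ?_
    rw [PhiEprime, Finset.mul_sum]
  have key : Tendsto (fun ε : ℝ => ((pOfPartition lam : ℝ) / A) *
      (ε ^ d * PhiEprime (Real.exp (-ε)) l)) (𝓝[>] 0)
      (𝓝 (((pOfPartition lam : ℝ) / A) * N)) := hPhi.const_mul _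
  have hfun : ∀ ε : ℝ, ((pOfPartition lam : ℝ) / A) * (ε ^ d * PhiEprime (Real.exp (-ε)) l)
      = ε ^ d * ((pOfPartition lam : ℝ) * wEprime (Real.exp (-ε)) lam) := by
    intro ε
    rw [wEprime, ← hl, ← hA]
    ring
  have hval : ((pOfPartition lam : ℝ) / A) * N
      = if lam = part1 d then 1 / (Nat.factorial d : ℝ) else 0 := by
    rcases eq_or_ne l.length d with h | h
    · -- all parts are 1
      have hlameq : lam = part1 d := eq_part1_of_card lam (by rw [← hcard, h])
      have hone : ∀ k : Fin l.length, l.get k = 1 := by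
        intro k
        have hmem : l.get k ∈ lam.parts.toList := List.get_mem l k
        rw [Multiset.mem_toList, hlameq] at hmem
        exact Multiset.eq_of_mem_replicate hmem
      have hS : ∀ (σ : Equiv.Perm (Fin l.length)) (j : Fin l.length),
          (∑ i ∈ Finset.univ.filter (· ≤ j), l.get (σ i) : ℕ) = (j : ℕ) + 1 := by
        intro σ j
        have : ∀ i ∈ Finset.univ.filter (· ≤ j), l.get (σ i) = 1 := fun i _ => hone _
        rw [Finset.sum_congr rfl this, Finset.sum_const, smul_eq_mul, mul_one,
          show Finset.univ.filter (· ≤ j) = Finset.Iic j by ext i; simp,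
          Fin.card_Iic]
      have hprodval : ∀ σ : Equiv.Perm (Fin l.length),
          (∏ j : Fin l.length,
            ((∑ i ∈ Finset.univ.filter (· ≤ j), l.get (σ i) : ℕ) : ℝ)⁻¹)
          = ((Nat.factorial d : ℝ))⁻¹ := by
        intro σ
        simp_rw [hS]
        rw [Finset.prod_inv_distrib]
        congr 1
        rw [← Nat.cast_prod]
        congr 1
        rw [Fin.prod_univ_eq_prod_range (fun j => j + 1) l.length,
          Finset.prod_range_add_one_eq_factorial, h]
      have hNval : N = (Nat.factorial d : ℝ) * ((Nat.factorial d : ℝ))⁻¹ := by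
        rw [hN]
        simp_rw [if_pos h, hprodval]
        rw [Finset.sum_const, Finset.card_univ, Fintype.card_perm, Fintype.card_fin, h,
          nsmul_eq_mul]
      have hfac : (Nat.factorial d : ℝ) ≠ 0 := Nat.cast_ne_zero.2 (Nat.factorial_ne_zero d)
      have hp1 : (pOfPartition lam : ℝ) = 1 := by
        rw [hlameq]
        have : pOfPartition (part1 d) = 1 := by
          simp [pOfPartition, part1, Multiset.map_replicate, Multiset.prod_replicate,
            Fintype.card_unique]
        rw [this, Nat.cast_one]
      have hAval : A = (Nat.factorial d : ℝ) := by
        rw [hA, hlameq]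
        have : (part1 d).parts.toFinset = {1} := by
          show (Multiset.replicate d 1).toFinset = {1}
          rw [Multiset.toFinset_replicate, if_neg hd.ne']
        rw [show (∏ i ∈ (part1 d).parts.toFinset, Nat.factorial ((part1 d).parts.count i))
            = Nat.factorial d by
          rw [this, Finset.prod_singleton,
            show (part1 d).parts.count 1 = d from Multiset.count_replicate_self 1 d]]
      rw [hNval, hp1, hAval, if_pos hlameq, mul_inv_cancel₀ hfac, mul_one, one_div]
    · have hne : lam ≠ part1 d := by
        intro he
        apply h
        rw [hcard, he]
        simp [part1]
      rw [if_neg hne, hN]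
      simp [if_neg h]
  rw [← hval]
  exact key.congr hfun

/-- Classical limit of the partition function:
`lim_{ε→0⁺} ε^d z_d(e^{-ε}) = 1/d!`. -/
theorem stmt_17 (d : ℕ) (hd : 0 < d) :
    Tendsto (fun ε : ℝ => ε ^ d * zPartition d (Real.exp (-ε)))
      (𝓝[>] 0) (𝓝 (1 / (Nat.factorial d : ℝ))) := by
  have key := tendsto_finset_sum (Finset.univ : Finset (Nat.Partition d))
    (fun lam _ => lam_tendsto d hd lam)
  have hsum : (∑ lam : Nat.Partition d,
      if lam = part1 d then 1 / (Nat.factorial d : ℝ) else 0) = 1 / (Nat.factorial d : ℝ) := by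
    rw [Finset.sum_ite_eq' Finset.univ (part1 d) (fun _ => 1 / (Nat.factorial d : ℝ))]
    simp
  rw [← hsum]
  refine key.congr fun ε => ?_
  rw [zPartition, Finset.mul_sum]
end
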